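/- Let S = P_S ∪ L_S be a resolving set for a biaffine plane of order q. Then |P_S| ≥ q − |S|/(q−1) and |L_S| ≥ q − |S|/(q−1). -/

import Mathlib

open Set

/-- The bipartite point-line incidence graph of an incidence relation `I`. -/
def IncGraph {Pt Ln : Type*} (I : Pt → Ln → Prop) : SimpleGraph (Pt ⊕ Ln) where
  Adj x y := (∃ p l, x = Sum.inl p ∧ y = Sum.inr l ∧ I p l) ∨
             (∃ p l, x = Sum.inr l ∧ y = Sum.inl p ∧ I p l)
  symm := by
    constructor; rintro x y (⟨p, l, hx, hy, h⟩ | ⟨p, l, hx, hy, h⟩)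
    · exact Or.inr ⟨p, l, hy, hx, h⟩
    · exact Or.inl ⟨p, l, hy, hx, h⟩
  loopless := by
    constructor; rintro x (⟨p, l, hx, hy, h⟩ | ⟨p, l, hx, hy, h⟩) <;> subst hx <;> simp_all

/-- A set of vertices is a resolving set if every vertex is determined
by its distances to the elements of `S`. -/
def IsResolvingSet {V : Type*} (G : SimpleGraph V) (S : Set V) : Prop :=
  ∀ x y : V, (∀ s ∈ S, G.dist x s = G.dist y s) → x = y

/-- A biaffine plane of order `q` (an affine plane with one parallel class of lines
removed), together with its partition into `q` parallel classes of lines (given by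
`dir`, the direction) and `q` non-adjacency classes of points (given by `cls`):
`q²` points and `q²` lines, each point on `q` lines, each line with `q` points,
two points on at most one common line; two lines are in the same parallel class iff
they are equal or disjoint; two points are in the same non-adjacency class iff they
are equal or non-collinear; and for every non-incident point-line pair `(p, l)` there
is exactly one line through `p` missing `l` and exactly one point of `l` not
collinear with `p`. -/
def IsBiaffinePlane {Pt Ln : Type*} (q : ℕ) (I : Pt → Ln → Prop)
    (dir : Ln → Fin q) (cls : Pt → Fin q) : Prop :=
  Nat.card Pt = q ^ 2 ∧ Nat.card Ln = q ^ 2 ∧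
  (∀ l, {p | I p l}.ncard = q) ∧
  (∀ p, {l | I p l}.ncard = q) ∧
  (∀ p₁ p₂ : Pt, p₁ ≠ p₂ → {l | I p₁ l ∧ I p₂ l}.ncard ≤ 1) ∧
  (∀ l₁ l₂ : Ln, dir l₁ = dir l₂ ↔ (l₁ = l₂ ∨ ∀ p, ¬ (I p l₁ ∧ I p l₂))) ∧
  (∀ p₁ p₂ : Pt, cls p₁ = cls p₂ ↔ (p₁ = p₂ ∨ ∀ l, ¬ (I p₁ l ∧ I p₂ l))) ∧
  (∀ p l, ¬ I p l →
    (∃! l', I p l' ∧ ∀ p', ¬ (I p' l ∧ I p' l')) ∧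
    (∃! p', I p' l ∧ ∀ l', ¬ (I p l' ∧ I p' l')))

/-!
A point off a line is at distance 3 from it, and two distinct lines are at distance 2 or 4
according to whether they meet, i.e. whether they lie in different parallel classes. So two
parallel lines outside `L_S` that miss every point of `P_S` have the same distances to all of
`S`; hence there is at most one such line per parallel class. Every other line lies in `L_S` or
is one of the at most `q |P_S|` lines through a point of `P_S`, so `q² ≤ q |P_S| + |L_S| + q`,
which rearranges to `(q - |P_S|)(q - 1) ≤ |P_S| + |L_S|`.
The bound on `|L_S|` is the same argument in the dual structure, where the non-adjacency
classes of points play the role of parallel classes.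
-/

namespace SimpleGraph

variable {V W : Type*} {G : SimpleGraph V} {G' : SimpleGraph W} {u v : V}

lemma Iso.dist_le (e : G ≃g G') (u v : V) : G'.dist (e u) (e v) ≤ G.dist u v := by
  by_cases h : G.Reachable u v
  · obtain ⟨w, hw⟩ := h.exists_walk_length_eq_dist
    simpa [hw] using SimpleGraph.dist_le (w.map e.toHom)
  · simp [dist_eq_zero_of_not_reachable (Iso.reachable_iff.not.mpr h)]

lemma Iso.dist_eq (e : G ≃g G') (u v : V) : G'.dist (e u) (e v) = G.dist u v :=
  (e.dist_le u v).antisymm (by simpa using e.symm.dist_le (e u) (e v))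

lemma IsResolvingSet.preimage_iso {S : Set W} (hS : IsResolvingSet G' S) (e : G ≃g G') :
    IsResolvingSet G (e ⁻¹' S) := by
  intro x y hxy
  refine e.injective (hS _ _ fun s hs => ?_)
  obtain ⟨s, rfl⟩ := e.surjective s
  simpa only [e.dist_eq] using hxy s hs

/-- A 2-colouring forces `G.dist u v ≡ w.length [MOD 2]`. -/
lemma Coloring.dist_eq_length (c : G.Coloring Bool) (w : G.Walk u v)
    (h : w.length ≤ G.dist u v + 1) : G.dist u v = w.length := by
  obtain ⟨w', hw'⟩ := w.reachable.exists_walk_length_eq_dist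
  have hpar : Even (G.dist u v) ↔ Even w.length := by
    rw [← hw', c.even_length_iff_congr, c.even_length_iff_congr]
  simp only [Nat.even_iff] at hpar
  have := dist_le w
  omega

end SimpleGraph

namespace IncGraph

open SimpleGraph Sum

variable {A B : Type*} {I : A → B → Prop} {a a' : A} {b b' : B}

@[simp]
lemma adj_inl_inr : (IncGraph I).Adj (inl a) (inr b) ↔ I a b := by
  simp [IncGraph]

@[simp]
lemma adj_inr_inl : (IncGraph I).Adj (inr b) (inl a) ↔ I a b := by
  simp [IncGraph]

@[simp]
lemma not_adj_inl_inl : ¬ (IncGraph I).Adj (inl a) (inl a') := by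
  simp [IncGraph]

@[simp]
lemma not_adj_inr_inr : ¬ (IncGraph I).Adj (inr b) (inr b') := by
  simp [IncGraph]

def coloring (I : A → B → Prop) : (IncGraph I).Coloring Bool :=
  Coloring.mk Sum.isLeft <| by
    rintro (_ | _) (_ | _) h <;> simp_all

def flipIso (I : A → B → Prop) : IncGraph (flip I) ≃g IncGraph I where
  toEquiv := Equiv.sumComm B A
  map_rel_iff' := by rintro (_ | _) (_ | _) <;> simp [flip]

lemma isResolvingSet_flip {PS : Set A} {LS : Set B}
    (hS : IsResolvingSet (IncGraph I) (inl '' PS ∪ inr '' LS)) :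
    IsResolvingSet (IncGraph (flip I)) (inl '' LS ∪ inr '' PS) := by
  convert hS.preimage_iso (flipIso I) using 1
  ext (_ | _) <;> simp [flipIso]

lemma dist_inr_inr_of_incident (hbb' : b ≠ b') (hb : I a b) (hb' : I a b') :
    (IncGraph I).dist (inr b) (inr b') = 2 := by
  let w : (IncGraph I).Walk (inr b) (inr b') :=
    .cons (adj_inr_inl.mpr hb) (.cons (adj_inl_inr.mpr hb') .nil)
  refine (coloring I).dist_eq_length w ?_
  have : (IncGraph I).dist (inr b) (inr b') ≠ 0 :=
    dist_ne_zero_iff_ne_and_reachable.mpr ⟨by simpa, w.reachable⟩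
  simp [w]; omega

lemma dist_inl_inr_of_not_incident {m : B} (hab : ¬ I a b) (ham : I a m) (ha'm : I a' m)
    (ha'b : I a' b) : (IncGraph I).dist (inl a) (inr b) = 3 := by
  let w : (IncGraph I).Walk (inl a) (inr b) :=
    .cons (adj_inl_inr.mpr ham) (.cons (adj_inr_inl.mpr ha'm) (.cons (adj_inl_inr.mpr ha'b) .nil))
  refine (coloring I).dist_eq_length w ?_
  have h0 : (IncGraph I).dist (inl a) (inr b) ≠ 0 :=
    dist_ne_zero_iff_ne_and_reachable.mpr ⟨by simp, w.reachable⟩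
  have h1 : (IncGraph I).dist (inl a) (inr b) ≠ 1 := by simpa [dist_eq_one_iff_adj]
  simp [w]; omega

lemma dist_inr_inr_of_disjoint {m : B} (hbb' : b ≠ b') (hdisj : ∀ x, ¬ (I x b ∧ I x b'))
    (hab : I a b) (ham : I a m) (ha'm : I a' m) (ha'b' : I a' b') :
    (IncGraph I).dist (inr b) (inr b') = 4 := by
  let w : (IncGraph I).Walk (inr b) (inr b') :=
    .cons (adj_inr_inl.mpr hab) (.cons (adj_inl_inr.mpr ham)
      (.cons (adj_inr_inl.mpr ha'm) (.cons (adj_inl_inr.mpr ha'b') .nil)))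
  refine (coloring I).dist_eq_length w ?_
  have hfar : 2 < (IncGraph I).edist (inr b) (inr b') := by
    refine two_lt_edist_iff.mpr ⟨by simpa, by simp, ?_⟩
    ext (x | x)
    · simpa [mem_commonNeighbors] using hdisj x
    · simp [mem_commonNeighbors]
  rw [← w.reachable.coe_dist_eq_edist] at hfar
  simp [w]; norm_cast at hfar

end IncGraph

lemma Set.Finite.ncard_biUnion_le_mul {α β : Type*} {s : Set α} (hs : s.Finite) {t : α → Set β}
    {r : ℕ} (ht : ∀ a ∈ s, (t a).ncard = r) : (⋃ a ∈ s, t a).ncard ≤ r * s.ncard := by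
  calc (⋃ a ∈ s, t a).ncard = (⋃ a ∈ hs.toFinset, t a).ncard := by simp
    _ ≤ ∑ a ∈ hs.toFinset, (t a).ncard := hs.toFinset.set_ncard_biUnion_le t
    _ = r * s.ncard := by
      rw [Finset.sum_congr rfl fun a ha => ht a (hs.mem_toFinset.mp ha), Finset.sum_const,
        smul_eq_mul, mul_comm, ncard_eq_toFinset_card s hs]

def IsParallelism {A B ι : Type*} (I : A → B → Prop) (dir : B → ι) : Prop :=
  ∀ b₁ b₂, dir b₁ = dir b₂ ↔ (b₁ = b₂ ∨ ∀ a, ¬ (I a b₁ ∧ I a b₂))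

namespace IsParallelism

open SimpleGraph Sum

variable {A B ι : Type*} {I : A → B → Prop} {dir : B → ι}

lemma exists_incident_of_ne (h : IsParallelism I dir) {b₁ b₂ : B} (hd : dir b₁ ≠ dir b₂) :
    ∃ a, I a b₁ ∧ I a b₂ := by
  by_contra! hc
  exact hd ((h b₁ b₂).mpr (Or.inr fun a hab => hc a hab.1 hab.2))

lemma injOn_incident (h : IsParallelism I dir) (a : A) : InjOn dir {b | I a b} :=
  fun _ hb₁ _ hb₂ hd => ((h _ _).mp hd).resolve_right fun hc => hc a ⟨hb₁, hb₂⟩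

lemma exists_incident_dir_eq [Finite ι] (h : IsParallelism I dir) {a : A}
    (ha : {b | I a b}.ncard = Nat.card ι) (d : ι) : ∃ b, I a b ∧ dir b = d := by
  have hsurj : dir '' {b | I a b} = univ :=
    eq_of_subset_of_ncard_le (subset_univ _) (by rw [(h.injOn_incident a).ncard_image, ha,
      ncard_univ])
  exact (hsurj ▸ mem_univ d : d ∈ dir '' {b | I a b})

lemma dist_inr_inr_of_dir_ne (h : IsParallelism I dir) {b₁ b₂ : B} (hb : b₁ ≠ b₂)
    (hd : dir b₁ ≠ dir b₂) : (IncGraph I).dist (inr b₁) (inr b₂) = 2 := by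
  obtain ⟨a, hab₁, hab₂⟩ := h.exists_incident_of_ne hd
  exact IncGraph.dist_inr_inr_of_incident hb hab₁ hab₂

variable [Nontrivial ι]

lemma dist_inl_inr (h : IsParallelism I dir) (hdirs : ∀ a d, ∃ b, I a b ∧ dir b = d) {a : A}
    {b : B} (hab : ¬ I a b) : (IncGraph I).dist (inl a) (inr b) = 3 := by
  obtain ⟨d, hd⟩ := exists_ne (dir b)
  obtain ⟨m, ham, rfl⟩ := hdirs a d
  obtain ⟨a', ha'm, ha'b⟩ := h.exists_incident_of_ne hd
  exact IncGraph.dist_inl_inr_of_not_incident hab ham ha'm ha'b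

lemma dist_inr_inr_of_dir_eq (h : IsParallelism I dir)
    (hdirs : ∀ a d, ∃ b, I a b ∧ dir b = d) (hne : ∀ b, ∃ a, I a b) {b₁ b₂ : B} (hb : b₁ ≠ b₂)
    (hd : dir b₁ = dir b₂) : (IncGraph I).dist (inr b₁) (inr b₂) = 4 := by
  obtain ⟨a, hab₁⟩ := hne b₁
  obtain ⟨d, hd'⟩ := exists_ne (dir b₁)
  obtain ⟨m, ham, rfl⟩ := hdirs a d
  obtain ⟨a', ha'm, ha'b₂⟩ := h.exists_incident_of_ne (hd ▸ hd')
  exact IncGraph.dist_inr_inr_of_disjoint hb (((h b₁ b₂).mp hd).resolve_left hb) hab₁ ham ha'm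
    ha'b₂

lemma injOn_skew_of_isResolvingSet (h : IsParallelism I dir)
    (hdirs : ∀ a d, ∃ b, I a b ∧ dir b = d) (hne : ∀ b, ∃ a, I a b) {PS : Set A} {LS : Set B}
    (hS : IsResolvingSet (IncGraph I) (inl '' PS ∪ inr '' LS)) :
    InjOn dir {b | b ∉ LS ∧ ∀ a ∈ PS, ¬ I a b} := by
  rintro b₁ ⟨hb₁L, hb₁P⟩ b₂ ⟨hb₂L, hb₂P⟩ hd
  refine inr_injective (hS _ _ ?_)
  rintro _ (⟨a, ha, rfl⟩ | ⟨m, hm, rfl⟩)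
  · rw [dist_comm, h.dist_inl_inr hdirs (hb₁P a ha), dist_comm, h.dist_inl_inr hdirs (hb₂P a ha)]
  · have hb₁m : b₁ ≠ m := (ne_of_mem_of_not_mem hm hb₁L).symm
    have hb₂m : b₂ ≠ m := (ne_of_mem_of_not_mem hm hb₂L).symm
    by_cases hdm : dir b₁ = dir m
    · rw [h.dist_inr_inr_of_dir_eq hdirs hne hb₁m hdm,
        h.dist_inr_inr_of_dir_eq hdirs hne hb₂m (hd ▸ hdm)]
    · rw [h.dist_inr_inr_of_dir_ne hb₁m hdm, h.dist_inr_inr_of_dir_ne hb₂m (hd ▸ hdm)]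

lemma card_le_of_isResolvingSet [Finite A] [Finite B] [Finite ι] (h : IsParallelism I dir)
    (hr : ∀ a, {b | I a b}.ncard = Nat.card ι) (hne : ∀ b, ∃ a, I a b) {PS : Set A}
    {LS : Set B} (hS : IsResolvingSet (IncGraph I) (inl '' PS ∪ inr '' LS)) :
    Nat.card B ≤ Nat.card ι * PS.ncard + LS.ncard + Nat.card ι := by
  have hdirs := fun a => h.exists_incident_dir_eq (hr a)
  have hcover : (univ : Set B) ⊆
      (⋃ a ∈ PS, {b | I a b}) ∪ LS ∪ {b | b ∉ LS ∧ ∀ a ∈ PS, ¬ I a b} := by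
    intro b _
    simp only [mem_union, mem_iUnion₂]
    grind
  have hblocked := PS.toFinite.ncard_biUnion_le_mul fun a _ => hr a
  have hskew : {b | b ∉ LS ∧ ∀ a ∈ PS, ¬ I a b}.ncard ≤ Nat.card ι := by
    simpa using ncard_le_ncard_of_injOn dir (fun _ _ => mem_univ _)
      (h.injOn_skew_of_isResolvingSet hdirs hne hS)
  calc Nat.card B = (univ : Set B).ncard := (ncard_univ B).symm
    _ ≤ _ := ncard_le_ncard hcover
    _ ≤ _ := (ncard_union_le _ _).trans (Nat.add_le_add_right (ncard_union_le _ _) _)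
    _ ≤ _ := by omega

end IsParallelism

lemma sub_div_pred_le_of_sq_le {q x y : ℕ} (hq : 2 ≤ q) (h : q ^ 2 ≤ q * x + y + q) :
    (q : ℝ) - (x + y) / (q - 1) ≤ x := by
  have hq' : (2 : ℝ) ≤ q := by exact_mod_cast hq
  have h' : (q : ℝ) ^ 2 ≤ q * x + y + q := by exact_mod_cast h
  rw [sub_le_comm, le_div_iff₀ (by linarith)]
  nlinarith

theorem biaffine_resolving_lower_bounds_general {Pt Ln : Type*}
    (q : ℕ) (hq : 2 ≤ q) (I : Pt → Ln → Prop) (dir : Ln → Fin q) (cls : Pt → Fin q)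
    (hBA : IsBiaffinePlane q I dir cls)
    (PS : Set Pt) (LS : Set Ln)
    (hres : IsResolvingSet (IncGraph I) (Sum.inl '' PS ∪ Sum.inr '' LS)) :
    (PS.ncard : ℝ) ≥ q - (PS.ncard + LS.ncard) / (q - 1) ∧
    (LS.ncard : ℝ) ≥ q - (PS.ncard + LS.ncard) / (q - 1) := by
  obtain ⟨hcardP, hcardL, hpts, hlines, -, hdir, hcls, -⟩ := hBA
  have hq0 : q ≠ 0 := by omega
  have : Nontrivial (Fin q) := Fin.nontrivial_iff_two_le.mpr hq
  have : Finite Pt := Nat.finite_of_card_ne_zero (hcardP ▸ pow_ne_zero 2 hq0)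
  have : Finite Ln := Nat.finite_of_card_ne_zero (hcardL ▸ pow_ne_zero 2 hq0)
  have hL := IsParallelism.card_le_of_isResolvingSet hdir
    (fun p => (hlines p).trans (Nat.card_fin q).symm)
    (fun l => nonempty_of_ncard_ne_zero ((hpts l).trans_ne hq0)) hres
  have hP := IsParallelism.card_le_of_isResolvingSet (I := flip I) hcls
    (fun l => (hpts l).trans (Nat.card_fin q).symm)
    (fun p => nonempty_of_ncard_ne_zero ((hlines p).trans_ne hq0))
    (IncGraph.isResolvingSet_flip hres)
  rw [hcardL, Nat.card_fin] at hL
  rw [hcardP, Nat.card_fin] at hP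
  exact ⟨sub_div_pred_le_of_sq_le hq hL,
    add_comm (PS.ncard : ℝ) _ ▸ sub_div_pred_le_of_sq_le hq hP⟩

/-- If `S = P_S ∪ L_S` is a resolving set for a biaffine plane of order `q`, then
`|P_S| ≥ q - |S|/(q-1)` and `|L_S| ≥ q - |S|/(q-1)`. -/
theorem biaffine_resolving_lower_bounds {Pt Ln : Type*} [Fintype Pt] [Fintype Ln]
    (q : ℕ) (hq : 2 ≤ q) (I : Pt → Ln → Prop) (dir : Ln → Fin q) (cls : Pt → Fin q)
    (hBA : IsBiaffinePlane q I dir cls)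
    (PS : Set Pt) (LS : Set Ln)
    (hres : IsResolvingSet (IncGraph I) (Sum.inl '' PS ∪ Sum.inr '' LS)) :
    (PS.ncard : ℝ) ≥ q - (PS.ncard + LS.ncard) / (q - 1) ∧
    (LS.ncard : ℝ) ≥ q - (PS.ncard + LS.ncard) / (q - 1) :=
  biaffine_resolving_lower_bounds_general q hq I dir cls hBA PS LS hres
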